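/- arXiv:1307.7236 — 2 statements merged into one kernel-verified Lean document; each statement's English description precedes it below -/
import Mathlib

section
/- Let $R$ be a simply laced root system with $W$-invariant inner product $(\cdot,\cdot)$ normalized so that $(\alpha,\alpha)=2$ for all roots. Let $\varpi_1, \varpi_2$ be minuscule fundamental weights (i.e. $(\varpi_i, \alpha^\vee) \in \{-1,0,1\}$ for all roots $\alpha$), and define $d(\lambda_1,\lambda_2) = (\varpi_1,\varpi_2) - (\lambda_1,\lambda_2)$ for $\lambda_i \in W\cdot\varpi_i$. Then $d(\lambda_1,\lambda_2) \geq 0$, and $d(\lambda_1,\lambda_2) = 0$ if and only if $\lambda_1$ and $\lambda_2$ lie in a common (closed) Weyl chamber. -/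
open scoped RealInnerProductSpace

variable {E : Type*} [NormedAddCommGroup E] [InnerProductSpace ℝ E]

/-- The reflection in the root `α` (with the normalization `(α, α) = 2`, so that the coroot
of `α` is identified with `α`): `s_α(x) = x - (x, α) α`. -/
noncomputable def rootReflection (α x : E) : E := x - ⟪x, α⟫ • α

/-- The Weyl group orbit `W · ϖ` of a weight `ϖ`, where `W` is generated by the reflections
in the roots belonging to `R`. -/
def weylOrbit (R : Set E) (ϖ : E) : Set E :=
  {lam : E | Relation.ReflTransGen (fun μ ν => ∃ α ∈ R, ν = rootReflection α μ) ϖ lam}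

/-!
The Weyl group acts by isometries permuting `R`, so `(λ₁, λ₂) = (ϖ₁, μ)` for some `μ ∈ W·ϖ₂`.
The key fact is that two distinct points `μ ≠ ν` of a minuscule orbit are separated by a root
`β` with `(μ, β) = 1` and `(ν, β) = -1`; it is proved by induction on the length of a chain of
reflections from `μ` to `ν`, using that a chain crossing the wall of a root twice can be
shortened. Replacing `μ` by `s_β μ = μ - β` raises `(μ, ν)` by one and does not decrease `(x, μ)`
when `x` lies in a common chamber with `ν`; as `(μ, ν) ≤ (ν, ν)`, this reaches `ν` after finitely
many steps, so `ν` maximises `(x, ·)` on its orbit. With `x = ϖ₁`, `ν = ϖ₂` this is the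
inequality. Exchanging the roles of `(ϖ₁, ϖ₂)` and `(λ₁, λ₂)` gives equality for pairs in a common
chamber, while a pair separated by a root is improved by one reflection.
-/

section RootReflection

lemma inner_rootReflection_left (α x y : E) :
    ⟪rootReflection α x, y⟫ = ⟪x, y⟫ - ⟪x, α⟫ * ⟪α, y⟫ := by
  simp only [rootReflection, inner_sub_left, real_inner_smul_left]

lemma inner_rootReflection_left_eq_right (α x y : E) :
    ⟪rootReflection α x, y⟫ = ⟪x, rootReflection α y⟫ := by
  simp only [rootReflection, inner_sub_left, inner_sub_right, real_inner_smul_left,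
    real_inner_smul_right, real_inner_comm α y]
  ring

variable {α : E}

lemma rootReflection_of_inner_eq_zero {x : E} (h : ⟪x, α⟫ = 0) : rootReflection α x = x := by
  rw [rootReflection, h, zero_smul, sub_zero]

lemma rootReflection_of_inner_eq_one {x : E} (h : ⟪x, α⟫ = 1) :
    rootReflection α x = x - α := by
  rw [rootReflection, h, one_smul]

lemma rootReflection_of_inner_eq_neg_one {x : E} (h : ⟪x, α⟫ = -1) :
    rootReflection α x = x + α := by
  rw [rootReflection, h, neg_one_smul, sub_neg_eq_add]

variable (hα : ⟪α, α⟫ = 2)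
include hα

lemma rootReflection_self : rootReflection α α = -α := by
  rw [rootReflection, hα, two_smul, sub_add_cancel_left]

lemma rootReflection_rootReflection (x : E) : rootReflection α (rootReflection α x) = x := by
  simp only [rootReflection, inner_sub_left, real_inner_smul_left, hα]
  rw [show ⟪x, α⟫ - ⟪x, α⟫ * 2 = -⟪x, α⟫ by ring, neg_smul, sub_neg_eq_add, sub_add_cancel]

lemma inner_rootReflection_rootReflection (x y : E) :
    ⟪rootReflection α x, rootReflection α y⟫ = ⟪x, y⟫ := by
  rw [inner_rootReflection_left_eq_right, rootReflection_rootReflection hα]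

end RootReflection

structure IsSimplyLacedRootSet (R : Set E) : Prop where
  inner_self_eq_two : ∀ α ∈ R, ⟪α, α⟫ = 2
  rootReflection_mem : ∀ α ∈ R, ∀ β ∈ R, rootReflection α β ∈ R

def IsMinuscule (R : Set E) (x : E) : Prop := ∀ α ∈ R, ⟪x, α⟫ ∈ ({-1, 0, 1} : Set ℝ)

def InCommonChamber (R : Set E) (x y : E) : Prop := ∀ α ∈ R, 0 ≤ ⟪x, α⟫ * ⟪y, α⟫

variable {R : Set E}

namespace IsSimplyLacedRootSet

variable (hR : IsSimplyLacedRootSet R)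
include hR

lemma neg_mem {α : E} (hα : α ∈ R) : -α ∈ R := by
  rw [← rootReflection_self (hR.inner_self_eq_two α hα)]
  exact hR.rootReflection_mem α hα α hα

lemma eq_neg_of_inner_eq_neg_two {α β : E} (hα : α ∈ R) (hβ : β ∈ R) (h : ⟪α, β⟫ = -2) :
    β = -α := by
  have hsum : ⟪α + β, α + β⟫ = 0 := by
    rw [real_inner_add_add_self, hR.inner_self_eq_two α hα, hR.inner_self_eq_two β hβ, h]
    norm_num
  exact eq_neg_of_add_eq_zero_right (inner_self_eq_zero.mp hsum)

lemma add_mem_of_inner_eq_neg_one {α β : E} (hα : α ∈ R) (hβ : β ∈ R) (h : ⟪α, β⟫ = -1) :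
    β + α ∈ R := by
  rw [← rootReflection_of_inner_eq_neg_one (by rwa [real_inner_comm])]
  exact hR.rootReflection_mem α hα β hβ

end IsSimplyLacedRootSet

lemma IsMinuscule.inner_eq {x : E} (hx : IsMinuscule R x) {α : E} (hα : α ∈ R) :
    ⟪x, α⟫ = -1 ∨ ⟪x, α⟫ = 0 ∨ ⟪x, α⟫ = 1 := by
  simpa only [Set.mem_insert_iff, Set.mem_singleton_iff] using hx α hα

lemma IsMinuscule.rootReflection (hR : IsSimplyLacedRootSet R) {x α : E} (hx : IsMinuscule R x)
    (hα : α ∈ R) : IsMinuscule R (rootReflection α x) := fun β hβ => by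
  rw [inner_rootReflection_left_eq_right]
  exact hx _ (hR.rootReflection_mem α hα β hβ)

lemma inner_rootReflection_eq_add_one {x y β : E} (hx : IsMinuscule R x) (hy : IsMinuscule R y)
    (hβ : β ∈ R) (h : ⟪x, β⟫ * ⟪y, β⟫ < 0) : ⟪rootReflection β x, y⟫ = ⟪x, y⟫ + 1 := by
  have hxy : ⟪x, β⟫ * ⟪β, y⟫ = -1 := by
    rw [real_inner_comm y β]
    rcases hx.inner_eq hβ with h₁ | h₁ | h₁ <;> rcases hy.inner_eq hβ with h₂ | h₂ | h₂ <;>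
      rw [h₁, h₂] at h ⊢ <;> norm_num at h <;> norm_num
  rw [inner_rootReflection_left, hxy, sub_neg_eq_add]

lemma inCommonChamber_of_nonneg {Rpos : Set E} (hpos : R = Rpos ∪ -Rpos) {x y : E}
    (hx : ∀ α ∈ Rpos, 0 ≤ ⟪x, α⟫) (hy : ∀ α ∈ Rpos, 0 ≤ ⟪y, α⟫) : InCommonChamber R x y := by
  intro α hα
  rw [hpos] at hα
  rcases hα with hα | hα
  · exact mul_nonneg (hx α hα) (hy α hα)
  · have hx' := hx _ (Set.mem_neg.mp hα)
    have hy' := hy _ (Set.mem_neg.mp hα)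
    rw [inner_neg_right, neg_nonneg] at hx' hy'
    exact mul_nonneg_of_nonpos_of_nonpos hx' hy'

section WeylOrbit

lemma rootReflection_mem_weylOrbit {ϖ μ α : E} (hα : α ∈ R) (hμ : μ ∈ weylOrbit R ϖ) :
    rootReflection α μ ∈ weylOrbit R ϖ :=
  Relation.ReflTransGen.tail hμ ⟨α, hα, rfl⟩

lemma mem_weylOrbit_trans {ϖ μ ν : E} (hμ : μ ∈ weylOrbit R ϖ) (hν : ν ∈ weylOrbit R μ) :
    ν ∈ weylOrbit R ϖ :=
  Relation.ReflTransGen.trans hμ hν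

lemma mem_weylOrbit_symm (hR : IsSimplyLacedRootSet R) {ϖ μ : E} (hμ : μ ∈ weylOrbit R ϖ) :
    ϖ ∈ weylOrbit R μ := by
  induction hμ with
  | refl => exact Relation.ReflTransGen.refl
  | @tail ν _ _ hstep ih =>
    obtain ⟨α, hα, rfl⟩ := hstep
    refine Relation.ReflTransGen.head ⟨α, hα, ?_⟩ ih
    rw [rootReflection_rootReflection (hR.inner_self_eq_two α hα)]

lemma IsMinuscule.of_mem_weylOrbit (hR : IsSimplyLacedRootSet R) {ϖ μ : E}
    (hϖ : IsMinuscule R ϖ) (hμ : μ ∈ weylOrbit R ϖ) : IsMinuscule R μ := by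
  induction hμ with
  | refl => exact hϖ
  | tail _ hstep ih =>
    obtain ⟨α, hα, rfl⟩ := hstep
    exact ih.rootReflection hR hα

lemma inner_self_eq_of_mem_weylOrbit (hR : IsSimplyLacedRootSet R) {ϖ μ : E}
    (hμ : μ ∈ weylOrbit R ϖ) : ⟪μ, μ⟫ = ⟪ϖ, ϖ⟫ := by
  induction hμ with
  | refl => rfl
  | tail _ hstep ih =>
    obtain ⟨α, hα, rfl⟩ := hstep
    rw [inner_rootReflection_rootReflection (hR.inner_self_eq_two α hα), ih]

lemma exists_mem_weylOrbit_inner_eq {ϖ lam : E} (h : lam ∈ weylOrbit R ϖ) (y : E) :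
    ∃ y' ∈ weylOrbit R y, ⟪lam, y⟫ = ⟪ϖ, y'⟫ := by
  induction h generalizing y with
  | refl => exact ⟨y, Relation.ReflTransGen.refl, rfl⟩
  | tail _ hstep ih =>
    obtain ⟨α, hα, rfl⟩ := hstep
    obtain ⟨y', hy', heq⟩ := ih (rootReflection α y)
    refine ⟨y', mem_weylOrbit_trans (rootReflection_mem_weylOrbit hα .refl) hy', ?_⟩
    rw [inner_rootReflection_left_eq_right, heq]

end WeylOrbit

inductive ReflectionChain (R : Set E) : ℕ → E → E → Prop
  | refl (x : E) : ReflectionChain R 0 x x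
  | head {n : ℕ} {x y α : E} :
      α ∈ R → ReflectionChain R n (rootReflection α x) y → ReflectionChain R (n + 1) x y

lemma exists_reflectionChain_of_mem_weylOrbit (hR : IsSimplyLacedRootSet R) {μ ν : E}
    (hμ : μ ∈ weylOrbit R ν) : ∃ n, ReflectionChain R n μ ν := by
  refine Relation.ReflTransGen.head_induction_on (mem_weylOrbit_symm hR hμ) ⟨0, .refl ν⟩ ?_
  rintro _ _ ⟨α, hα, rfl⟩ - ⟨n, hn⟩
  exact ⟨n + 1, .head hα hn⟩

namespace ReflectionChain

lemma head_sub {n : ℕ} {x y α : E} (hα : α ∈ R) (hxα : ⟪x, α⟫ = 1)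
    (h : ReflectionChain R n (x - α) y) : ReflectionChain R (n + 1) x y :=
  .head hα (by rwa [rootReflection_of_inner_eq_one hxα])

variable (hR : IsSimplyLacedRootSet R)
include hR

lemma cases_succ {n : ℕ} {x y : E} (hx : IsMinuscule R x) (h : ReflectionChain R (n + 1) x y) :
    ReflectionChain R n x y ∨ ∃ α ∈ R, ⟪x, α⟫ = 1 ∧ ReflectionChain R n (x - α) y := by
  obtain _ | ⟨hα, h⟩ := h
  rcases hx.inner_eq hα with hxα | hxα | hxα
  · refine .inr ⟨_, hR.neg_mem hα, by rw [inner_neg_right, hxα, neg_neg], ?_⟩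
    rwa [sub_neg_eq_add, ← rootReflection_of_inner_eq_neg_one hxα]
  · exact .inl (by rwa [rootReflection_of_inner_eq_zero hxα] at h)
  · exact .inr ⟨_, hα, hxα, by rwa [← rootReflection_of_inner_eq_one hxα]⟩

/-- Here `τ + α = s_α τ`: a chain that has to cross the wall of `α` may as well cross it first. -/
lemma shorten {n : ℕ} {τ α ν : E} (h : ReflectionChain R n τ ν) (hτ : IsMinuscule R τ)
    (hα : α ∈ R) (hτα : ⟪τ, α⟫ = -1) (hνα : ⟪ν, α⟫ = 1) :
    ∃ m ≤ n, ReflectionChain R m (τ + α) ν := by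
  induction n generalizing τ with
  | zero =>
    obtain ⟨⟩ := h
    rw [hνα] at hτα
    norm_num at hτα
  | succ n ih =>
    rcases cases_succ hR hτ h with h | ⟨β, hβ, hτβ, h⟩
    · obtain ⟨m, hm, h⟩ := ih h hτ hτα
      exact ⟨m, by omega, h⟩
    have hτ' : IsMinuscule R (τ - β) := by
      simpa only [rootReflection_of_inner_eq_one hτβ] using hτ.rootReflection hR hβ
    have hτ'α : ⟪τ - β, α⟫ = -1 - ⟪α, β⟫ := by
      rw [inner_sub_left, hτα, real_inner_comm]
    rcases hτ'.inner_eq hα with hβα | hβα | hβα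
    · -- `β ⟂ α`: the reflections in `α` and `β` commute.
      have hαβ : ⟪α, β⟫ = 0 := by linarith
      obtain ⟨m, hm, h⟩ := ih h hτ' hβα
      refine ⟨m + 1, by omega, head_sub hβ ?_ ?_⟩
      · rw [inner_add_left, hτβ, hαβ, add_zero]
      · rwa [add_sub_right_comm]
    · -- `(α, β) = -1`: one reflection in the root `α + β` replaces the first two.
      have hαβ : ⟪α, β⟫ = -1 := by linarith
      refine ⟨n + 1, le_rfl, head_sub (hR.add_mem_of_inner_eq_neg_one hα hβ hαβ) ?_ ?_⟩
      · rw [inner_add_left, inner_add_right, inner_add_right, hτβ, hτα, hαβ,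
          hR.inner_self_eq_two α hα]
        norm_num
      · rwa [add_sub_add_right_eq_sub]
    · have hαβ : ⟪α, β⟫ = -2 := by linarith
      refine ⟨n, by omega, ?_⟩
      rwa [hR.eq_neg_of_inner_eq_neg_two hα hβ hαβ, sub_neg_eq_add] at h

lemma exists_separating_root {n : ℕ} {μ ν : E} (h : ReflectionChain R n μ ν)
    (hμ : IsMinuscule R μ) (hν : IsMinuscule R ν) (hne : μ ≠ ν) :
    ∃ β ∈ R, ⟪μ, β⟫ = 1 ∧ ⟪ν, β⟫ = -1 := by
  induction n using Nat.strong_induction_on generalizing μ with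
  | _ n ih =>
    obtain _ | n := n
    · obtain ⟨⟩ := h
      exact absurd rfl hne
    rcases cases_succ hR hμ h with h | ⟨α, hα, hμα, h⟩
    · exact ih n (Nat.lt_succ_self n) h hμ hne
    have hμ' : IsMinuscule R (μ - α) := by
      simpa only [rootReflection_of_inner_eq_one hμα] using hμ.rootReflection hR hα
    have hμ'α : ⟪μ - α, α⟫ = -1 := by
      rw [inner_sub_left, hμα, hR.inner_self_eq_two α hα]
      norm_num
    rcases hν.inner_eq hα with hνα | hνα | hνα
    · exact ⟨α, hα, hμα, hνα⟩
    · have hne' : μ - α ≠ ν := fun heq => by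
        rw [heq, hνα] at hμ'α
        norm_num at hμ'α
      obtain ⟨β, hβ, hμ'β, hνβ⟩ := ih n (Nat.lt_succ_self n) h hμ' hne'
      have hμβ : ⟪μ, β⟫ = 1 + ⟪α, β⟫ := by
        rw [← hμ'β, inner_sub_left]
        ring
      rcases hμ.inner_eq hβ with hμβ' | hμβ' | hμβ'
      · have hβα := hR.eq_neg_of_inner_eq_neg_two hα hβ (by linarith)
        rw [hβα, inner_neg_right, hνα] at hνβ
        norm_num at hνβ
      · have hαβ : ⟪α, β⟫ = -1 := by linarith
        refine ⟨β + α, hR.add_mem_of_inner_eq_neg_one hα hβ hαβ, ?_, ?_⟩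
        · rw [inner_add_right, hμβ', hμα]
          norm_num
        · rw [inner_add_right, hνβ, hνα]
          norm_num
      · exact ⟨β, hβ, hμβ', hνβ⟩
    · obtain ⟨m, hm, h⟩ := shorten hR h hμ' hα hμ'α hνα
      rw [sub_add_cancel] at h
      exact ih m (by omega) h hμ hne

end ReflectionChain

section Maximality

variable (hR : IsSimplyLacedRootSet R)
include hR

lemma exists_separating_root_of_mem_weylOrbit {μ ν : E} (hν : IsMinuscule R ν)
    (hμ : μ ∈ weylOrbit R ν) (hne : μ ≠ ν) : ∃ β ∈ R, ⟪μ, β⟫ = 1 ∧ ⟪ν, β⟫ = -1 := by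
  obtain ⟨n, h⟩ := exists_reflectionChain_of_mem_weylOrbit hR hμ
  exact ReflectionChain.exists_separating_root hR h (hν.of_mem_weylOrbit hR hμ) hν hne

lemma inner_le_of_mem_weylOrbit {x μ ν : E} (hν : IsMinuscule R ν) (hxν : InCommonChamber R x ν)
    (hμ : μ ∈ weylOrbit R ν) : ⟪x, μ⟫ ≤ ⟪x, ν⟫ := by
  have gap_nonneg : ∀ μ ∈ weylOrbit R ν, 0 ≤ ⟪ν, ν⟫ - ⟪μ, ν⟫ := fun μ hμ => by
    have := real_inner_sub_sub_self μ ν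
    rw [inner_self_eq_of_mem_weylOrbit hR hμ] at this
    linarith [real_inner_self_nonneg (x := μ - ν)]
  obtain ⟨M, hM⟩ := exists_nat_gt (⟪ν, ν⟫ - ⟪μ, ν⟫)
  induction M generalizing μ with
  | zero =>
    push_cast at hM
    linarith [gap_nonneg μ hμ]
  | succ M ih =>
    by_cases hne : μ = ν
    · rw [hne]
    obtain ⟨β, hβ, hμβ, hνβ⟩ := exists_separating_root_of_mem_weylOrbit hR hν hμ hne
    have hxβ : ⟪x, β⟫ ≤ 0 := by
      have := hxν β hβ
      rwa [hνβ, mul_neg_one, neg_nonneg] at this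
    have hμ' : μ - β ∈ weylOrbit R ν := by
      rw [← rootReflection_of_inner_eq_one hμβ]
      exact rootReflection_mem_weylOrbit hβ hμ
    have hgap : ⟪ν, ν⟫ - ⟪μ - β, ν⟫ < M := by
      rw [inner_sub_left, real_inner_comm ν β, hνβ]
      push_cast at hM
      linarith
    have hle := ih hμ' hgap
    rw [inner_sub_right] at hle
    linarith

lemma inner_le_inner_of_inCommonChamber {ϖ₁ ϖ₂ lam₁ lam₂ : E} (hϖ₂ : IsMinuscule R ϖ₂)
    (hϖ : InCommonChamber R ϖ₁ ϖ₂) (hlam₁ : lam₁ ∈ weylOrbit R ϖ₁)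
    (hlam₂ : lam₂ ∈ weylOrbit R ϖ₂) : ⟪lam₁, lam₂⟫ ≤ ⟪ϖ₁, ϖ₂⟫ := by
  obtain ⟨y, hy, heq⟩ := exists_mem_weylOrbit_inner_eq hlam₁ lam₂
  rw [heq]
  exact inner_le_of_mem_weylOrbit hR hϖ₂ hϖ (mem_weylOrbit_trans hlam₂ hy)

end Maximality

theorem statement5_general (R Rpos : Set E) (ϖ₁ ϖ₂ lam₁ lam₂ : E)
    (hpos : R = Rpos ∪ (-Rpos))
    (hlen : ∀ α ∈ R, ⟪α, α⟫ = 2)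
    (hrefl : ∀ α ∈ R, ∀ β ∈ R, rootReflection α β ∈ R)
    (hdom₁ : ∀ α ∈ Rpos, 0 ≤ ⟪ϖ₁, α⟫) (hdom₂ : ∀ α ∈ Rpos, 0 ≤ ⟪ϖ₂, α⟫)
    (hmin₁ : ∀ α ∈ R, ⟪ϖ₁, α⟫ ∈ ({-1, 0, 1} : Set ℝ))
    (hmin₂ : ∀ α ∈ R, ⟪ϖ₂, α⟫ ∈ ({-1, 0, 1} : Set ℝ))
    (hlam₁ : lam₁ ∈ weylOrbit R ϖ₁) (hlam₂ : lam₂ ∈ weylOrbit R ϖ₂) :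
    0 ≤ ⟪ϖ₁, ϖ₂⟫ - ⟪lam₁, lam₂⟫ ∧
      (⟪ϖ₁, ϖ₂⟫ - ⟪lam₁, lam₂⟫ = 0 ↔ ∀ α ∈ R, 0 ≤ ⟪lam₁, α⟫ * ⟪lam₂, α⟫) := by
  have hR : IsSimplyLacedRootSet R := ⟨hlen, hrefl⟩
  have hϖ : InCommonChamber R ϖ₁ ϖ₂ := inCommonChamber_of_nonneg hpos hdom₁ hdom₂
  have hmin₁' : IsMinuscule R lam₁ := IsMinuscule.of_mem_weylOrbit hR hmin₁ hlam₁
  have hmin₂' : IsMinuscule R lam₂ := IsMinuscule.of_mem_weylOrbit hR hmin₂ hlam₂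
  have hbound : ∀ {l : E}, l ∈ weylOrbit R ϖ₁ → ⟪l, lam₂⟫ ≤ ⟪ϖ₁, ϖ₂⟫ := fun h =>
    inner_le_inner_of_inCommonChamber hR hmin₂ hϖ h hlam₂
  refine ⟨sub_nonneg.mpr (hbound hlam₁), fun heq α hα => ?_, fun hlam => ?_⟩
  · by_contra! hsep
    have hstep := hbound (rootReflection_mem_weylOrbit hα hlam₁)
    rw [inner_rootReflection_eq_add_one hmin₁' hmin₂' hα hsep] at hstep
    linarith
  · have := inner_le_inner_of_inCommonChamber hR hmin₂' hlam (mem_weylOrbit_symm hR hlam₁)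
      (mem_weylOrbit_symm hR hlam₂)
    linarith [hbound hlam₁]

/-- Let `R` be a simply laced root system (all roots of squared length `2`)
with positive roots `Rpos`, let `ϖ₁, ϖ₂` be minuscule fundamental weights (dominant, and
pairing with every root in `{-1,0,1}`), and for `λᵢ ∈ W·ϖᵢ` define
`d(λ₁,λ₂) = (ϖ₁,ϖ₂) - (λ₁,λ₂)`.  Then `d(λ₁,λ₂) ≥ 0`, and `d(λ₁,λ₂) = 0` if and only if
`λ₁` and `λ₂` lie in a common closed Weyl chamber, i.e. there is no root `α` with
`(λ₁,α)(λ₂,α) < 0`. -/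
theorem statement5 (R Rpos : Set E) (ϖ₁ ϖ₂ lam₁ lam₂ : E)
    (hpos : R = Rpos ∪ (-Rpos))
    (hlen : ∀ α ∈ R, ⟪α, α⟫ = 2)
    (hneg : ∀ α ∈ R, -α ∈ R)
    (hrefl : ∀ α ∈ R, ∀ β ∈ R, rootReflection α β ∈ R)
    (hdom₁ : ∀ α ∈ Rpos, 0 ≤ ⟪ϖ₁, α⟫) (hdom₂ : ∀ α ∈ Rpos, 0 ≤ ⟪ϖ₂, α⟫)
    (hmin₁ : ∀ α ∈ R, ⟪ϖ₁, α⟫ ∈ ({-1, 0, 1} : Set ℝ))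
    (hmin₂ : ∀ α ∈ R, ⟪ϖ₂, α⟫ ∈ ({-1, 0, 1} : Set ℝ))
    (hlam₁ : lam₁ ∈ weylOrbit R ϖ₁) (hlam₂ : lam₂ ∈ weylOrbit R ϖ₂) :
    0 ≤ ⟪ϖ₁, ϖ₂⟫ - ⟪lam₁, lam₂⟫ ∧
      (⟪ϖ₁, ϖ₂⟫ - ⟪lam₁, lam₂⟫ = 0 ↔ ∀ α ∈ R, 0 ≤ ⟪lam₁, α⟫ * ⟪lam₂, α⟫) :=
  statement5_general R Rpos ϖ₁ ϖ₂ lam₁ lam₂ hpos hlen hrefl hdom₁ hdom₂ hmin₁ hmin₂ hlam₁ hlam₂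
end

section
/- Let $R$ be an irreducible simply laced root system with minuscule fundamental weight $\varpi$, Weyl group $W$ with longest element $w_0$, and let $w_P$ be the longest element of $W^P$ for the parabolic $P$ stabilizing $\varpi$. Then the cascade roots $\theta_1, \dots, \theta_s$ of $R$ that lie in $\{\alpha \in R : (\alpha, \varpi) = 1\}$ satisfy: $(\theta_i, \varpi) = 1$ and $(\theta_i, w_P(\varpi)) = -1$ for all $i$ (using $w_P(\varpi) = w_0(\varpi)$), and the $\theta_i$ are pairwise orthogonal; consequently $d(\varpi, w_0(\varpi)) = (\varpi,\varpi) - (\varpi, w_0(\varpi)) \geq s$. -/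
set_option linter.unusedSectionVars false
set_option linter.unusedVariables false
set_option maxHeartbeats 1000000


open scoped RealInnerProductSpace

variable {E : Type*} [NormedAddCommGroup E] [InnerProductSpace ℝ E]

/-- Dominance order associated to a set `Δ` of simple roots: `α ≤ β` iff `β - α` is a
non-negative integer combination of the simple roots. -/
def dominanceLE (Δ : Finset E) (α β : E) : Prop :=
  ∃ c : E → ℕ, β - α = ∑ s ∈ Δ, (c s : ℝ) • s

lemma rr_inner_left (α u v : E) : ⟪rootReflection α u, v⟫ = ⟪u, v⟫ - ⟪u, α⟫ * ⟪α, v⟫ := by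
  simp [rootReflection, inner_sub_left, real_inner_smul_left]

lemma rr_inner_right (α u v : E) : ⟪u, rootReflection α v⟫ = ⟪u, v⟫ - ⟪v, α⟫ * ⟪u, α⟫ := by
  simp [rootReflection, inner_sub_right, real_inner_smul_right]

lemma rr_adj (α u v : E) : ⟪rootReflection α u, v⟫ = ⟪u, rootReflection α v⟫ := by
  rw [rr_inner_left, rr_inner_right, real_inner_comm α v]; ring

lemma rr_isom (α : E) (h2 : ⟪α, α⟫ = 2) (u v : E) :
    ⟪rootReflection α u, rootReflection α v⟫ = ⟪u, v⟫ := by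
  rw [rr_adj, rr_inner_right, rr_inner_right, rr_inner_left, real_inner_comm α v, h2]; ring

lemma mem3 {r : ℝ} (h : r ∈ ({-1, 0, 1} : Set ℝ)) : r = -1 ∨ r = 0 ∨ r = 1 := by
  simpa using h

section Orbit

variable {R : Set E} {ϖ : E}
  (hrefl : ∀ α ∈ R, ∀ β ∈ R, rootReflection α β ∈ R)
  (hlen : ∀ α ∈ R, ⟪α, α⟫ = 2)

include hrefl hlen

lemma orbit_min (hmin : ∀ α ∈ R, ⟪ϖ, α⟫ ∈ ({-1, 0, 1} : Set ℝ)) :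
    ∀ lam ∈ weylOrbit R ϖ, ∀ β ∈ R, ⟪lam, β⟫ ∈ ({-1, 0, 1} : Set ℝ) := by
  intro lam hlam
  induction hlam with
  | refl => exact hmin
  | tail hab hbc ih =>
    obtain ⟨α, hαR, rfl⟩ := hbc
    intro β hβ
    rw [rr_adj]
    exact ih _ (hrefl α hαR β hβ)

lemma orbit_norm : ∀ lam ∈ weylOrbit R ϖ, ⟪lam, lam⟫ = ⟪ϖ, ϖ⟫ := by
  intro lam hlam
  induction hlam with
  | refl => rfl
  | tail hab hbc ih =>
    obtain ⟨α, hαR, rfl⟩ := hbc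
    rw [rr_isom α (hlen α hαR)]
    exact ih

lemma orbit_step : ∀ lam ∈ weylOrbit R ϖ, ∀ β ∈ R, rootReflection β lam ∈ weylOrbit R ϖ :=
  fun _ hlam β hβ => hlam.tail ⟨β, hβ, rfl⟩

lemma orbit_frame (θ : ℕ → E) (n : ℕ) (hθR : ∀ j, j < n → θ j ∈ R) :
    ∀ lam ∈ weylOrbit R ϖ, ∃ η : ℕ → E, ∀ j, j < n →
      η j ∈ R ∧ ⟪lam, η j⟫ = ⟪ϖ, θ j⟫ ∧ ∀ k, k < n → ⟪η j, η k⟫ = ⟪θ j, θ k⟫ := by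
  intro lam hlam
  induction hlam with
  | refl => exact ⟨θ, fun j hj => ⟨hθR j hj, rfl, fun k _ => rfl⟩⟩
  | tail hab hbc ih =>
    obtain ⟨α, hαR, rfl⟩ := hbc
    obtain ⟨η, hη⟩ := ih
    refine ⟨fun j => rootReflection α (η j), fun j hj =>
      ⟨hrefl α hαR _ (hη j hj).1, ?_, ?_⟩⟩
    · rw [rr_isom α (hlen α hαR)]; exact (hη j hj).2.1
    · intro k hk; rw [rr_isom α (hlen α hαR)]; exact (hη j hj).2.2 k hk

end Orbit

/-- Let `R` be an irreducible simply laced root system with minuscule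
fundamental weight `ϖ`, and let `w₀ϖ = w₀(ϖ) = w_P(ϖ)` be the lowest weight of the orbit
`W·ϖ`.  Consider the cascade `(Rᵢ, θᵢ)` (`R₀ = R`, `θᵢ` the highest root of `Rᵢ`, `Rᵢ₊₁`
the roots of `Rᵢ` orthogonal to `θᵢ`), and let `θ_{sel 0}, …, θ_{sel (s-1)}` be the cascade
roots lying in `{α ∈ R : (α,ϖ) = 1}`.  Then `(θᵢ,ϖ) = 1` and `(θᵢ, w₀(ϖ)) = -1` for these
cascade roots, they are pairwise orthogonal, and consequently
`d(ϖ, w₀(ϖ)) = (ϖ,ϖ) - (ϖ, w₀(ϖ)) ≥ s`. -/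
theorem statement15 (R Rpos : Set E) (Δ : Finset E) (ϖ w₀ϖ : E)
    (hΔ : (Δ : Set E) ⊆ Rpos) (hpos : R = Rpos ∪ (-Rpos))
    (hposΔ : ∀ α ∈ Rpos, dominanceLE Δ 0 α)
    (hlen : ∀ α ∈ R, ⟪α, α⟫ = 2)
    (hneg : ∀ α ∈ R, -α ∈ R)
    (hrefl : ∀ α ∈ R, ∀ β ∈ R, rootReflection α β ∈ R)
    (hirr : ∀ s ∈ Δ, ∀ t ∈ Δ, s ≠ t →
      ∃ n, ∃ u : Fin (n + 1) → E, (∀ i, u i ∈ Δ) ∧ u 0 = s ∧ u (Fin.last n) = t ∧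
        ∀ i : Fin n, ⟪u i.castSucc, u i.succ⟫ ≠ 0)
    (hmin : ∀ α ∈ R, ⟪ϖ, α⟫ ∈ ({-1, 0, 1} : Set ℝ))
    (hdom : ∀ α ∈ Rpos, 0 ≤ ⟪ϖ, α⟫)
    (hw₀orb : w₀ϖ ∈ weylOrbit R ϖ)
    (hw₀low : ∀ α ∈ Rpos, ⟪w₀ϖ, α⟫ ≤ 0)
    (Rseq : ℕ → Set E) (θ : ℕ → E) (n : ℕ)
    (hcasc0 : Rseq 0 = R)
    (hcascsucc : ∀ i < n, Rseq (i + 1) = {α ∈ Rseq i | ⟪α, θ i⟫ = 0})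
    (hθmem : ∀ i < n, θ i ∈ Rseq i)
    (hθhigh : ∀ i < n, ∀ α ∈ Rseq i, dominanceLE Δ α (θ i))
    (s : ℕ) (sel : Fin s → ℕ) (hselmono : StrictMono sel)
    (hseln : ∀ m, sel m < n)
    (hselU : ∀ m, ⟪θ (sel m), ϖ⟫ = 1)
    (hselall : ∀ i < n, ⟪θ i, ϖ⟫ = 1 → ∃ m, sel m = i) :
    (∀ m, ⟪θ (sel m), ϖ⟫ = 1 ∧ ⟪θ (sel m), w₀ϖ⟫ = -1) ∧
    (∀ m m', m ≠ m' → ⟪θ (sel m), θ (sel m')⟫ = 0) ∧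
    (s : ℝ) ≤ ⟪ϖ, ϖ⟫ - ⟪ϖ, w₀ϖ⟫ := by
  classical
  -- cascade basics
  have RseqSub : ∀ l, l ≤ n → Rseq l ⊆ R := by
    intro l
    induction l with
    | zero => intro _; rw [hcasc0]
    | succ k ih =>
      intro hl α hα
      rw [hcascsucc k (by omega)] at hα
      exact ih (by omega) hα.1
  have Rseq_mem : ∀ l, l ≤ n → ∀ α ∈ R, (∀ j, j < l → ⟪α, θ j⟫ = 0) → α ∈ Rseq l := by
    intro l
    induction l with
    | zero => intro _ α hα _; rwa [hcasc0]
    | succ k ih =>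
      intro hl α hα h
      rw [hcascsucc k (by omega)]
      exact ⟨ih (by omega) α hα (fun j hj => h j (by omega)), h k (by omega)⟩
  have hθR : ∀ l, l < n → θ l ∈ R := fun l hl => RseqSub l (le_of_lt hl) (hθmem l hl)
  have hθ2 : ∀ l, l < n → ⟪θ l, θ l⟫ = 2 := fun l hl => hlen _ (hθR l hl)
  have Rseq_orth : ∀ l, l ≤ n → ∀ α ∈ Rseq l, ∀ j, j < l → ⟪α, θ j⟫ = 0 := by
    intro l
    induction l with
    | zero => intro _ α _ j hj; omega
    | succ k ih =>
      intro hl α hα j hj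
      rw [hcascsucc k (by omega)] at hα
      rcases Nat.lt_succ_iff_lt_or_eq.mp hj with h | h
      · exact ih (by omega) α hα.1 j h
      · subst h; exact hα.2
  have θorth : ∀ j k, j < k → k < n → ⟪θ j, θ k⟫ = 0 := by
    intro j k hjk hk
    rw [real_inner_comm]
    exact Rseq_orth k (le_of_lt hk) (θ k) (hθmem k hk) j hjk
  have hsx : ∀ t ∈ Δ, ⟪t, w₀ϖ⟫ ≤ 0 := fun t ht => by
    rw [real_inner_comm]; exact hw₀low t (hΔ ht)
  have hsϖ : ∀ t ∈ Δ, 0 ≤ ⟪t, ϖ⟫ := fun t ht => by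
    rw [real_inner_comm]; exact hdom t (hΔ ht)
  have domx : ∀ l, l < n → ∀ γ ∈ Rseq l, ⟪θ l, w₀ϖ⟫ ≤ ⟪γ, w₀ϖ⟫ := by
    intro l hl γ hγ
    obtain ⟨c, hc⟩ := hθhigh l hl γ hγ
    have h1 : ⟪θ l - γ, w₀ϖ⟫ ≤ 0 := by
      rw [hc, sum_inner]
      apply Finset.sum_nonpos
      intro t ht
      rw [real_inner_smul_left]
      exact mul_nonpos_of_nonneg_of_nonpos (Nat.cast_nonneg _) (hsx t ht)
    rw [inner_sub_left] at h1; linarith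
  have domϖ : ∀ l, l < n → ∀ γ ∈ Rseq l, ⟪γ, ϖ⟫ ≤ ⟪θ l, ϖ⟫ := by
    intro l hl γ hγ
    obtain ⟨c, hc⟩ := hθhigh l hl γ hγ
    have h1 : 0 ≤ ⟪θ l - γ, ϖ⟫ := by
      rw [hc, sum_inner]
      apply Finset.sum_nonneg
      intro t ht
      rw [real_inner_smul_left]
      exact mul_nonneg (Nat.cast_nonneg _) (hsϖ t ht)
    rw [inner_sub_left] at h1; linarith
  have hϖorb : ϖ ∈ weylOrbit R ϖ := Relation.ReflTransGen.refl
  have pairϖ : ∀ β ∈ R, ⟪β, ϖ⟫ = -1 ∨ ⟪β, ϖ⟫ = 0 ∨ ⟪β, ϖ⟫ = 1 := fun β hβ => by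
    rw [real_inner_comm]; exact mem3 (hmin β hβ)
  have pairx : ∀ β ∈ R, ⟪β, w₀ϖ⟫ = -1 ∨ ⟪β, w₀ϖ⟫ = 0 ∨ ⟪β, w₀ϖ⟫ = 1 := fun β hβ => by
    rw [real_inner_comm]; exact mem3 (orbit_min hrefl hlen hmin w₀ϖ hw₀orb β hβ)
  rcases Nat.eq_zero_or_pos s with hs | hs
  · subst hs
    refine ⟨fun m => m.elim0, fun m => m.elim0, ?_⟩
    have h2 : ⟪w₀ϖ, w₀ϖ⟫ = ⟪ϖ, ϖ⟫ := orbit_norm hrefl hlen w₀ϖ hw₀orb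
    have hcs := real_inner_le_norm ϖ w₀ϖ
    have e1 := real_inner_self_eq_norm_mul_norm ϖ
    have e2 := real_inner_self_eq_norm_mul_norm w₀ϖ
    have hn1 := norm_nonneg ϖ
    have hn2 := norm_nonneg w₀ϖ
    simp only [Nat.cast_zero]
    nlinarith [sq_nonneg (‖ϖ‖ - ‖w₀ϖ‖)]
  · -- main branch : 0 < s
    have hs1lt : s - 1 < s := by omega
    have hle : ∀ v, ∀ h : v < s, v ≤ sel ⟨v, h⟩ := by
      intro v
      induction v with
      | zero => intro h; exact Nat.zero_le _
      | succ v ih =>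
        intro h
        have h' : v < s := by omega
        have h1 := ih h'
        have h2 : sel ⟨v, h'⟩ < sel ⟨v + 1, h⟩ := hselmono (by simp [Fin.mk_lt_mk])
        omega
    have hMn : sel ⟨s - 1, hs1lt⟩ < n := hseln _
    have hsM : s - 1 ≤ sel ⟨s - 1, hs1lt⟩ := hle (s - 1) hs1lt
    have hsn : s ≤ n := by omega
    have A1' : ∀ l, l ≤ sel ⟨s - 1, hs1lt⟩ → ⟪θ l, ϖ⟫ = 1 := by
      intro l hlM
      have hln : l < n := by omega
      rcases eq_or_lt_of_le hlM with h | hlt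
      · subst h; exact hselU _
      · have hmemM : θ (sel ⟨s - 1, hs1lt⟩) ∈ Rseq l :=
          Rseq_mem l (by omega) _ (hθR _ hMn)
            (fun j hj => by rw [real_inner_comm]; exact θorth j _ (by omega) hMn)
        have h1 := domϖ l hln _ hmemM
        have h2 := hselU (⟨s - 1, hs1lt⟩ : Fin s)
        rcases pairϖ (θ l) (hθR l hln) with h | h | h <;> linarith
    have A1 : ∀ l, l < s → ⟪θ l, ϖ⟫ = 1 := fun l hl => A1' l (by omega)
    have hMs : sel ⟨s - 1, hs1lt⟩ + 1 ≤ s := by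
      have hch : ∀ l : Fin (sel ⟨s - 1, hs1lt⟩ + 1), ∃ m, sel m = (l : ℕ) := by
        intro l
        have hl' : (l : ℕ) ≤ sel ⟨s - 1, hs1lt⟩ := by omega
        exact hselall l (by omega) (A1' l hl')
      choose f hf using hch
      have hinj : Function.Injective f := by
        intro a b hab
        have : (a : ℕ) = (b : ℕ) := by rw [← hf a, ← hf b, hab]
        exact Fin.ext this
      have := Fintype.card_le_of_injective f hinj
      simpa using this
    have A2 : ∀ m : Fin s, sel m < s := by
      intro m
      have hm := m.isLt
      have h1 : sel m ≤ sel ⟨s - 1, hs1lt⟩ := by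
        apply hselmono.monotone
        rw [Fin.le_def]
        simp only []
        omega
      omega
    obtain ⟨η, hη⟩ := orbit_frame hrefl hlen θ n hθR w₀ϖ hw₀orb
    have ηorth : ∀ a b, a < s → b < s → a ≠ b → ⟪η a, η b⟫ = 0 := by
      intro a b ha hb hab
      rw [(hη a (by omega)).2.2 b (by omega)]
      rcases Nat.lt_or_ge a b with h | h
      · exact θorth a b h (by omega)
      · rw [real_inner_comm]; exact θorth b a (by omega) (by omega)
    have ηx : ∀ a, a < s → ⟪η a, w₀ϖ⟫ = 1 := by
      intro a ha
      rw [real_inner_comm, (hη a (by omega)).2.1, real_inner_comm]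
      exact A1 a ha
    have DESC : ∀ k, k < s → ∃ F : Finset E,
        s ≤ F.card + k ∧
        (∀ γ ∈ F, γ ∈ R ∧ ⟪γ, w₀ϖ⟫ = -1 ∧ ∀ j, j < k → ⟪γ, θ j⟫ = 0) ∧
        (∀ γ ∈ F, ∀ δ ∈ F, γ ≠ δ → ⟪γ, δ⟫ = 0) := by
      intro k
      induction k with
      | zero =>
        intro _
        refine ⟨(Finset.range s).image (fun j => -η j), ?_, ?_, ?_⟩
        · have hinj : Set.InjOn (fun j => -η j) (Finset.range s) := by
            intro a ha b hb hab
            by_contra hne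
            have ha' : a < s := Finset.mem_range.mp ha
            have hb' : b < s := Finset.mem_range.mp hb
            have h1 : η a = η b := neg_inj.mp hab
            have h2 := ηorth a b ha' hb' hne
            rw [← h1, (hη a (by omega)).2.2 a (by omega), hθ2 a (by omega)] at h2
            norm_num at h2
          rw [Finset.card_image_of_injOn hinj, Finset.card_range]
          omega
        · intro γ hγ
          obtain ⟨j, hj, rfl⟩ := Finset.mem_image.mp hγ
          have hj' : j < s := Finset.mem_range.mp hj
          refine ⟨hneg _ (hη j (by omega)).1, ?_, fun _ h => by omega⟩
          rw [inner_neg_left, ηx j hj']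
        · intro γ hγ δ hδ hne
          obtain ⟨a, ha, rfl⟩ := Finset.mem_image.mp hγ
          obtain ⟨b, hb, rfl⟩ := Finset.mem_image.mp hδ
          have hab : a ≠ b := fun h => hne (by rw [h])
          rw [inner_neg_neg]
          exact ηorth a b (Finset.mem_range.mp ha) (Finset.mem_range.mp hb) hab
      | succ k ih =>
        intro hk1
        obtain ⟨F, hcard, hmem, horth⟩ := ih (by omega)
        have hkn : k < n := by omega
        have hkR := hθR k hkn
        by_cases hI : ∀ γ ∈ F, ⟪γ, θ k⟫ = 0
        · refine ⟨F, by omega, fun γ hγ => ⟨(hmem γ hγ).1, (hmem γ hγ).2.1, fun j hj => ?_⟩, horth⟩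
          rcases Nat.lt_succ_iff_lt_or_eq.mp hj with h | h
          · exact (hmem γ hγ).2.2 j h
          · subst h; exact hI γ hγ
        · push_neg at hI
          obtain ⟨γ₀, hγ₀F, hγ₀θ⟩ := hI
          obtain ⟨hγ₀R, hγ₀x, hγ₀j⟩ := hmem γ₀ hγ₀F
          have hγ₀seq : γ₀ ∈ Rseq k := Rseq_mem k (by omega) γ₀ hγ₀R hγ₀j
          have hθkx : ⟪θ k, w₀ϖ⟫ = -1 := by
            have h1 := domx k hkn γ₀ hγ₀seq
            rcases pairx (θ k) hkR with h | h | h <;> linarith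
          have huorb : rootReflection (θ k) w₀ϖ ∈ weylOrbit R ϖ :=
            orbit_step hrefl hlen w₀ϖ hw₀orb (θ k) hkR
          have cval : ∀ γ ∈ F, ⟪γ, θ k⟫ ≠ 0 → ⟪γ, θ k⟫ = 1 ∨ γ = θ k := by
            intro γ hγ hne
            obtain ⟨hγR, hγx, _⟩ := hmem γ hγ
            have hval : ⟪rootReflection (θ k) w₀ϖ, γ⟫ = -1 + ⟪γ, θ k⟫ := by
              rw [rr_inner_left, real_inner_comm γ w₀ϖ, hγx, real_inner_comm (θ k) w₀ϖ, hθkx,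
                real_inner_comm γ (θ k)]
              ring
            have h2 := mem3 (orbit_min hrefl hlen hmin _ huorb γ hγR)
            rw [hval] at h2
            have hc2 : ⟪γ, θ k⟫ = 2 → γ = θ k := by
              intro h2'
              have e1 : ⟪γ - θ k, γ - θ k⟫ = ⟪γ, γ⟫ - 2 * ⟪γ, θ k⟫ + ⟪θ k, θ k⟫ := by
                rw [inner_sub_left, inner_sub_right, inner_sub_right, real_inner_comm (θ k) γ]
                ring
              have e2 : ⟪γ - θ k, γ - θ k⟫ = 0 := by
                rw [e1, hlen γ hγR, hθ2 k hkn, h2']; ring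
              exact sub_eq_zero.mp (inner_self_eq_zero.mp e2)
            rcases h2 with h | h | h
            · exfalso; apply hne; linarith
            · left; linarith
            · right; exact hc2 (by linarith)
          by_cases hγ₀eq : γ₀ = θ k
          · -- the root θ k itself is in the family; drop it, others pass
            refine ⟨F.erase γ₀, ?_, ?_, ?_⟩
            · rw [Finset.card_erase_of_mem hγ₀F]
              have : 1 ≤ F.card := Finset.card_pos.mpr ⟨γ₀, hγ₀F⟩
              omega
            · intro γ hγ
              have hγF := Finset.mem_of_mem_erase hγ
              have hne := Finset.ne_of_mem_erase hγ
              refine ⟨(hmem γ hγF).1, (hmem γ hγF).2.1, fun j hj => ?_⟩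
              rcases Nat.lt_succ_iff_lt_or_eq.mp hj with h | h
              · exact (hmem γ hγF).2.2 j h
              · subst h; rw [← hγ₀eq]; exact horth γ hγF γ₀ hγ₀F hne
            · intro γ hγ δ hδ hne
              exact horth γ (Finset.mem_of_mem_erase hγ) δ (Finset.mem_of_mem_erase hδ) hne
          · have hc₀ : ⟪γ₀, θ k⟫ = 1 := (cval γ₀ hγ₀F hγ₀θ).resolve_right hγ₀eq
            by_cases hI2 : ∀ δ ∈ F, δ ≠ γ₀ → ⟪δ, θ k⟫ = 0
            · refine ⟨F.erase γ₀, ?_, ?_, ?_⟩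
              · rw [Finset.card_erase_of_mem hγ₀F]
                have : 1 ≤ F.card := Finset.card_pos.mpr ⟨γ₀, hγ₀F⟩
                omega
              · intro γ hγ
                have hγF := Finset.mem_of_mem_erase hγ
                have hne := Finset.ne_of_mem_erase hγ
                refine ⟨(hmem γ hγF).1, (hmem γ hγF).2.1, fun j hj => ?_⟩
                rcases Nat.lt_succ_iff_lt_or_eq.mp hj with h | h
                · exact (hmem γ hγF).2.2 j h
                · subst h; exact hI2 γ hγF hne
              · intro γ hγ δ hδ hne
                exact horth γ (Finset.mem_of_mem_erase hγ) δ (Finset.mem_of_mem_erase hδ) hne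
            · push_neg at hI2
              obtain ⟨γ₁, hγ₁F, hγ₁ne, hγ₁θ⟩ := hI2
              obtain ⟨hγ₁R, hγ₁x, hγ₁j⟩ := hmem γ₁ hγ₁F
              have hc₁ : ⟪γ₁, θ k⟫ = 1 := by
                rcases cval γ₁ hγ₁F hγ₁θ with h | h
                · exact h
                · exfalso
                  have h0 := horth γ₀ hγ₀F γ₁ hγ₁F (Ne.symm hγ₁ne)
                  rw [h] at h0
                  rw [h0] at hc₀
                  norm_num at hc₀
              have horth01 : ⟪γ₀, γ₁⟫ = 0 := horth γ₀ hγ₀F γ₁ hγ₁F (Ne.symm hγ₁ne)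
              have hrR : γ₀ + γ₁ - θ k ∈ R := by
                have h1 : rootReflection (θ k) γ₀ ∈ R := hrefl _ hkR _ hγ₀R
                have e1 : rootReflection (θ k) γ₀ = γ₀ - θ k := by
                  rw [rootReflection, hc₀, one_smul]
                rw [e1] at h1
                have h2 : rootReflection γ₁ (γ₀ - θ k) ∈ R := hrefl _ hγ₁R _ h1
                have e2 : rootReflection γ₁ (γ₀ - θ k) = γ₀ + γ₁ - θ k := by
                  rw [rootReflection]
                  have e3 : ⟪γ₀ - θ k, γ₁⟫ = -1 := by
                    rw [inner_sub_left, horth01, real_inner_comm γ₁ (θ k), hc₁]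
                    ring
                  rw [e3, neg_one_smul]
                  abel
                rwa [e2] at h2
              have hrx : ⟪γ₀ + γ₁ - θ k, w₀ϖ⟫ = -1 := by
                rw [inner_sub_left, inner_add_left, hγ₀x, hγ₁x, hθkx]; ring
              have hrθk : ⟪γ₀ + γ₁ - θ k, θ k⟫ = 0 := by
                rw [inner_sub_left, inner_add_left, hc₀, hc₁, hθ2 k hkn]; ring
              have hrθj : ∀ j, j < k → ⟪γ₀ + γ₁ - θ k, θ j⟫ = 0 := by
                intro j hj
                rw [inner_sub_left, inner_add_left, hγ₀j j hj, hγ₁j j hj,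
                  real_inner_comm (θ j) (θ k), θorth j k hj hkn]
                ring
              have hδ0 : ∀ δ ∈ F, δ ≠ γ₀ → δ ≠ γ₁ → ⟪δ, θ k⟫ = 0 := by
                intro δ hδF hδ₀ hδ₁
                by_contra hδθ
                have hcδ : ⟪δ, θ k⟫ = 1 := by
                  rcases cval δ hδF hδθ with h | h
                  · exact h
                  · exfalso
                    have h0 := horth γ₀ hγ₀F δ hδF (Ne.symm hδ₀)
                    rw [h] at h0
                    rw [h0] at hc₀
                    norm_num at hc₀
                obtain ⟨hδR, hδx, _⟩ := hmem δ hδF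
                have hrδ : ⟪γ₀ + γ₁ - θ k, δ⟫ = -1 := by
                  rw [inner_sub_left, inner_add_left, horth γ₀ hγ₀F δ hδF (Ne.symm hδ₀),
                    horth γ₁ hγ₁F δ hδF (Ne.symm hδ₁), real_inner_comm δ (θ k), hcδ]
                  ring
                have h1 : rootReflection δ (γ₀ + γ₁ - θ k) ∈ R := hrefl δ hδR _ hrR
                have e1 : rootReflection δ (γ₀ + γ₁ - θ k) = (γ₀ + γ₁ - θ k) + δ := by
                  rw [rootReflection, hrδ, neg_one_smul]
                  abel
                rw [e1] at h1
                have h2 := mem3 (orbit_min hrefl hlen hmin w₀ϖ hw₀orb _ h1)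
                have e2 : ⟪w₀ϖ, γ₀ + γ₁ - θ k + δ⟫ = -2 := by
                  rw [inner_add_right, real_inner_comm (γ₀ + γ₁ - θ k) w₀ϖ, hrx,
                    real_inner_comm δ w₀ϖ, hδx]
                  ring
                rw [e2] at h2
                norm_num at h2
              refine ⟨insert (γ₀ + γ₁ - θ k) ((F.erase γ₀).erase γ₁), ?_, ?_, ?_⟩
              · have hγ₁e : γ₁ ∈ F.erase γ₀ := Finset.mem_erase.mpr ⟨hγ₁ne, hγ₁F⟩
                have hrnot : (γ₀ + γ₁ - θ k) ∉ (F.erase γ₀).erase γ₁ := by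
                  intro hr
                  have hrF : (γ₀ + γ₁ - θ k) ∈ F :=
                    Finset.mem_of_mem_erase (Finset.mem_of_mem_erase hr)
                  have hrne₁ : (γ₀ + γ₁ - θ k) ≠ γ₁ := (Finset.mem_erase.mp hr).1
                  have hrne₀ : (γ₀ + γ₁ - θ k) ≠ γ₀ :=
                    (Finset.mem_erase.mp (Finset.mem_of_mem_erase hr)).1
                  have h0 : ⟪θ k, γ₀ + γ₁ - θ k⟫ = 0 := by
                    rw [real_inner_comm]; exact hδ0 _ hrF hrne₀ hrne₁
                  have e : ⟪γ₀ + γ₁ - θ k, γ₀ + γ₁ - θ k⟫ = 0 := by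
                    nth_rewrite 1 [show γ₀ + γ₁ - θ k = γ₀ + γ₁ - θ k from rfl]
                    rw [inner_sub_left, inner_add_left,
                      horth γ₀ hγ₀F _ hrF (Ne.symm hrne₀),
                      horth γ₁ hγ₁F _ hrF (Ne.symm hrne₁), h0]
                    ring
                  rw [hlen _ hrR] at e
                  norm_num at e
                rw [Finset.card_insert_of_notMem hrnot, Finset.card_erase_of_mem hγ₁e,
                  Finset.card_erase_of_mem hγ₀F]
                have h2c : 1 < F.card :=
                  Finset.one_lt_card.mpr ⟨γ₀, hγ₀F, γ₁, hγ₁F, Ne.symm hγ₁ne⟩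
                omega
              · intro γ hγ
                rcases Finset.mem_insert.mp hγ with h | hγ'
                · subst h
                  refine ⟨hrR, hrx, fun j hj => ?_⟩
                  rcases Nat.lt_succ_iff_lt_or_eq.mp hj with h | h
                  · exact hrθj j h
                  · subst h; exact hrθk
                · have hγF : γ ∈ F := Finset.mem_of_mem_erase (Finset.mem_of_mem_erase hγ')
                  have hne₁ : γ ≠ γ₁ := (Finset.mem_erase.mp hγ').1
                  have hne₀ : γ ≠ γ₀ := (Finset.mem_erase.mp (Finset.mem_of_mem_erase hγ')).1
                  refine ⟨(hmem γ hγF).1, (hmem γ hγF).2.1, fun j hj => ?_⟩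
                  rcases Nat.lt_succ_iff_lt_or_eq.mp hj with h | h
                  · exact (hmem γ hγF).2.2 j h
                  · subst h; exact hδ0 γ hγF hne₀ hne₁
              · intro γ hγ δ hδ hne
                have key : ∀ δ' ∈ (F.erase γ₀).erase γ₁, ⟪γ₀ + γ₁ - θ k, δ'⟫ = 0 := by
                  intro δ' hδ'
                  have hδ'F : δ' ∈ F := Finset.mem_of_mem_erase (Finset.mem_of_mem_erase hδ')
                  have hne₁ : δ' ≠ γ₁ := (Finset.mem_erase.mp hδ').1
                  have hne₀ : δ' ≠ γ₀ := (Finset.mem_erase.mp (Finset.mem_of_mem_erase hδ')).1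
                  rw [inner_sub_left, inner_add_left,
                    horth γ₀ hγ₀F δ' hδ'F (Ne.symm hne₀),
                    horth γ₁ hγ₁F δ' hδ'F (Ne.symm hne₁),
                    real_inner_comm δ' (θ k), hδ0 δ' hδ'F hne₀ hne₁]
                  ring
                rcases Finset.mem_insert.mp hγ with h | hγ'
                · subst h
                  rcases Finset.mem_insert.mp hδ with h' | hδ'
                  · exact absurd h'.symm hne
                  · exact key δ hδ'
                · rcases Finset.mem_insert.mp hδ with h' | hδ'
                  · subst h'
                    rw [real_inner_comm]
                    exact key γ hγ'
                  · exact horth γ (Finset.mem_of_mem_erase (Finset.mem_of_mem_erase hγ')) δ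
                      (Finset.mem_of_mem_erase (Finset.mem_of_mem_erase hδ')) hne
    have A3 : ∀ l, l < s → ⟪θ l, w₀ϖ⟫ = -1 := by
      intro l hl
      obtain ⟨F, hcard, hmem, -⟩ := DESC (s - 1) (by omega)
      have hFpos : 0 < F.card := by omega
      obtain ⟨γ, hγF⟩ := Finset.card_pos.mp hFpos
      obtain ⟨hγR, hγx, hγj⟩ := hmem γ hγF
      have hsn1 : s - 1 < n := by omega
      have hγseq : γ ∈ Rseq (s - 1) := Rseq_mem (s - 1) (by omega) γ hγR hγj
      have h1 : ⟪θ (s - 1), w₀ϖ⟫ = -1 := by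
        have h0 := domx (s - 1) hsn1 γ hγseq
        rcases pairx (θ (s - 1)) (hθR _ hsn1) with h | h | h <;> linarith
      have hmem2 : θ (s - 1) ∈ Rseq l := Rseq_mem l (by omega) _ (hθR _ hsn1)
        (fun j hj => by rw [real_inner_comm]; exact θorth j (s - 1) (by omega) hsn1)
      have h2 := domx l (by omega) _ hmem2
      rcases pairx (θ l) (hθR l (by omega)) with h | h | h <;> linarith
    have ZCH : ∀ k, k ≤ s → (w₀ϖ + ∑ l ∈ Finset.range k, θ l) ∈ weylOrbit R ϖ := by
      intro k
      induction k with
      | zero => intro _; simpa using hw₀orb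
      | succ k ih =>
        intro hk
        have hzk := ih (by omega)
        have hkn : k < n := by omega
        have hpair : ⟪w₀ϖ + ∑ l ∈ Finset.range k, θ l, θ k⟫ = -1 := by
          rw [inner_add_left, sum_inner]
          rw [Finset.sum_eq_zero (fun l hl => θorth l k (Finset.mem_range.mp hl) hkn)]
          rw [real_inner_comm]
          rw [A3 k (by omega)]
          ring
        have hstep := orbit_step hrefl hlen _ hzk (θ k) (hθR k hkn)
        have e : rootReflection (θ k) (w₀ϖ + ∑ l ∈ Finset.range k, θ l) =
            w₀ϖ + ∑ l ∈ Finset.range (k + 1), θ l := by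
          rw [rootReflection, hpair, neg_one_smul, Finset.sum_range_succ]
          abel
        rwa [e] at hstep
    refine ⟨fun m => ⟨hselU m, A3 (sel m) (A2 m)⟩, ?_, ?_⟩
    · intro m m' hne
      have hne' : sel m ≠ sel m' := fun h => hne (hselmono.injective h)
      rcases lt_or_gt_of_ne hne' with h | h
      · exact θorth _ _ h (hseln m')
      · rw [real_inner_comm]; exact θorth _ _ h (hseln m)
    · have hz := ZCH s le_rfl
      have hone : ∀ l ∈ Finset.range s, ⟪ϖ, θ l⟫ = (1 : ℝ) := by
        intro l hl
        rw [real_inner_comm]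
        exact A1 l (Finset.mem_range.mp hl)
      have hsum : (∑ l ∈ Finset.range s, ⟪ϖ, θ l⟫) = (s : ℝ) := by
        rw [Finset.sum_congr rfl hone, Finset.sum_const, Finset.card_range, nsmul_eq_mul, mul_one]
      have hval : ⟪ϖ, w₀ϖ + ∑ l ∈ Finset.range s, θ l⟫ = ⟪ϖ, w₀ϖ⟫ + s := by
        rw [inner_add_right, inner_sum, hsum]
      have hnormz : ⟪(w₀ϖ + ∑ l ∈ Finset.range s, θ l),
          (w₀ϖ + ∑ l ∈ Finset.range s, θ l)⟫ = ⟪ϖ, ϖ⟫ := orbit_norm hrefl hlen _ hz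
      have hcs := real_inner_le_norm ϖ (w₀ϖ + ∑ l ∈ Finset.range s, θ l)
      have e1 := real_inner_self_eq_norm_mul_norm ϖ
      have e2 := real_inner_self_eq_norm_mul_norm (w₀ϖ + ∑ l ∈ Finset.range s, θ l)
      have hn1 := norm_nonneg ϖ
      have hn2 := norm_nonneg (w₀ϖ + ∑ l ∈ Finset.range s, θ l)
      nlinarith [sq_nonneg (‖ϖ‖ - ‖w₀ϖ + ∑ l ∈ Finset.range s, θ l‖)]
end
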